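/- arXiv:2006.07705 — 2 statements merged into one kernel-verified Lean document; each statement's English description precedes it below -/
import Mathlib

section
/- For each m, the coefficient of q^m in (1/(q;q)_∞) Σ_{n=0}^∞ (-1)^n q^{n(3n+1)/2} equals N(m), the number of partitions of m with non-negative rank. -/
open PowerSeries Finset

noncomputable instance : TopologicalSpace (PowerSeries ℚ) :=
  inferInstanceAs (TopologicalSpace ((Unit →₀ ℕ) → ℚ))

/-- The rank of a partition: largest part minus number of parts. -/
def rank {n : ℕ} (P : n.Partition) : ℤ :=
  (P.parts.sup : ℤ) - (Multiset.card P.parts : ℤ)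

/-- The crank of a partition. -/
def crank {n : ℕ} (P : n.Partition) : ℤ :=
  if P.parts.count 1 = 0 then (P.parts.sup : ℤ)
  else ((P.parts.filter (fun x => P.parts.count 1 < x)).card : ℤ) - (P.parts.count 1 : ℤ)

/-- The number of partitions of `n`. -/
noncomputable def p (n : ℕ) : ℕ := Nat.card n.Partition

/-- `p` extended to the integers by `0` on negatives. -/
noncomputable def pz (m : ℤ) : ℕ := if 0 ≤ m then p m.toNat else 0

/-- The number of partitions of `n` with non-negative rank. -/
noncomputable def Nrank (n : ℕ) : ℕ := Nat.card {P : n.Partition // 0 ≤ rank P}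

/-- The number of partitions of `n` with positive rank. -/
noncomputable def Rrank (n : ℕ) : ℕ := Nat.card {P : n.Partition // 0 < rank P}

/-- The number of Garden of Eden partitions of `n` (rank at most `-2`). -/
noncomputable def gePart (n : ℕ) : ℕ := Nat.card {P : n.Partition // rank P ≤ -2}

/-- The number of partitions of `n` with non-negative crank. -/
noncomputable def Ccrank (n : ℕ) : ℕ := Nat.card {P : n.Partition // 0 ≤ crank P}

/-- The number of partitions of `n` with positive crank. -/
noncomputable def Dcrank (n : ℕ) : ℕ := Nat.card {P : n.Partition // 0 < crank P}

/-- The number of partitions of `n` in which `k` is the least positive integer that is not a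
part and there are more parts greater than `k` than parts less than `k`. -/
noncomputable def Mk (k n : ℕ) : ℕ := Nat.card {P : n.Partition //
  (∀ i, 1 ≤ i → i < k → (i : ℕ) ∈ P.parts) ∧ (k : ℕ) ∉ P.parts ∧
  (P.parts.filter (fun x => x < k)).card < (P.parts.filter (fun x => k < x)).card}

/-- The number of partitions of `n` with no part divisible by 3. -/
noncomputable def p3 (n : ℕ) : ℕ := Nat.card {P : n.Partition // ∀ x ∈ P.parts, ¬ (3 ∣ x)}

/-- The infinite product `(q;q)_∞` as a formal power series. -/
noncomputable def E : PowerSeries ℚ := ∏' i : ℕ, (1 - (X : PowerSeries ℚ) ^ (i + 1))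

/-- The finite product `(q;q)_n` as a formal power series. -/
noncomputable def qPoch (n : ℕ) : PowerSeries ℚ :=
  ∏ i ∈ range n, (1 - (X : PowerSeries ℚ) ^ (i + 1))

/-! Since `E⁻¹ = ∑ p(n) qⁿ`, the coefficient in question is `∑ⱼ (-1)ʲ p(m - ωⱼ)` with
`ωⱼ = j(3j+1)/2`. Conjugation negates the rank, so `N(m) = p(m) - #{rank ≥ 1}`. Dyson's map
(delete the first column, of length `ℓ`, and add a largest part `ℓ + r`) shows
`#{λ ⊢ n + r : rank λ ≥ r - 1} + #{λ ⊢ n : rank λ ≥ r + 2} = p(n)`. Taking `r = 3k + 2`, which is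
`ω_{k+1} - ω_k`, passes from rank `≥ 3k + 1` to rank `≥ 3k + 4`, and iterating from `k = 0`
expands `#{rank ≥ 1}` into the alternating sum. -/

namespace Multiset

theorem sup_mem_of_ne_zero {s : Multiset ℕ} (hs : s ≠ 0) : s.sup ∈ s := by
  induction s using Multiset.induction_on with
  | empty => exact absurd rfl hs
  | cons a s ih =>
    rw [sup_cons]
    rcases eq_or_ne s 0 with rfl | hs'
    · simp
    rcases max_choice a s.sup with h | h <;> rw [h]
    · exact mem_cons_self a s
    · exact mem_cons_of_mem (ih hs')

/-- Deletes the first column of a Young diagram given by its row lengths; `raiseParts u ℓ`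
attaches a first column of length `ℓ`. -/
def lowerParts (s : Multiset ℕ) : Multiset ℕ := (s.filter (2 ≤ ·)).map (· - 1)

def raiseParts (u : Multiset ℕ) (ℓ : ℕ) : Multiset ℕ := u.map (· + 1) + replicate (ℓ - card u) 1

section FirstColumn
variable {s u : Multiset ℕ} {ℓ : ℕ}

theorem card_lowerParts_le : card (lowerParts s) ≤ card s := by
  rw [lowerParts, card_map]
  exact card_le_card (filter_le _ _)

theorem lowerParts_pos {x : ℕ} (hx : x ∈ lowerParts s) : 0 < x := by
  obtain ⟨y, hy, rfl⟩ := mem_map.1 hx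
  have := of_mem_filter hy
  omega

theorem sup_lowerParts_le : (lowerParts s).sup ≤ s.sup - 1 := by
  refine sup_le.2 fun x hx => ?_
  obtain ⟨y, hy, rfl⟩ := mem_map.1 hx
  have := le_sup (mem_of_mem_filter hy)
  omega

theorem card_raiseParts (h : card u ≤ ℓ) : card (raiseParts u ℓ) = ℓ := by
  simp only [raiseParts, card_add, card_map, card_replicate]
  omega

theorem sum_raiseParts (h : card u ≤ ℓ) : (raiseParts u ℓ).sum = u.sum + ℓ := by
  simp only [raiseParts, sum_add, sum_map_add, map_id', map_const', sum_replicate, smul_eq_mul,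
    mul_one]
  omega

theorem sup_raiseParts_le : (raiseParts u ℓ).sup ≤ u.sup + 1 := by
  refine sup_le.2 fun x hx => ?_
  rcases mem_add.1 hx with hx | hx
  · obtain ⟨y, hy, rfl⟩ := mem_map.1 hx
    have := le_sup hy
    omega
  · rw [eq_of_mem_replicate hx]
    omega

theorem raiseParts_pos {x : ℕ} (hx : x ∈ raiseParts u ℓ) : 0 < x := by
  rcases mem_add.1 hx with hx | hx
  · obtain ⟨y, -, rfl⟩ := mem_map.1 hx
    omega
  · rw [eq_of_mem_replicate hx]
    omega

theorem lowerParts_raiseParts (hu : ∀ x ∈ u, 0 < x) : lowerParts (raiseParts u ℓ) = u := by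
  have hbig : (u.map (· + 1)).filter (2 ≤ ·) = u.map (· + 1) :=
    filter_eq_self.2 fun x hx => by
      obtain ⟨y, hy, rfl⟩ := mem_map.1 hx
      have := hu y hy
      omega
  have hones : (replicate (ℓ - card u) 1).filter (2 ≤ ·) = 0 :=
    filter_eq_nil.2 fun x hx => by rw [eq_of_mem_replicate hx]; omega
  rw [lowerParts, raiseParts, filter_add, hbig, hones, add_zero, map_map]
  exact (map_congr rfl fun x _ => by simp).trans (map_id u)

theorem raiseParts_lowerParts (hs : ∀ x ∈ s, 0 < x) : raiseParts (lowerParts s) (card s) = s := by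
  have hbig : (lowerParts s).map (· + 1) = s.filter (2 ≤ ·) := by
    rw [lowerParts, map_map]
    refine (map_congr rfl fun x hx => ?_).trans (map_id _)
    have := of_mem_filter hx
    simp only [Function.comp_apply, id_eq]
    omega
  have hones : replicate (card s - card (lowerParts s)) 1 = s.filter (¬ 2 ≤ ·) := by
    have hcard := card_add (s.filter (2 ≤ ·)) (s.filter (¬ 2 ≤ ·))
    rw [filter_add_not] at hcard
    rw [lowerParts, card_map]
    refine (eq_replicate.2 ⟨by omega, fun x hx => ?_⟩).symm
    have := of_mem_filter hx
    have := hs x (mem_of_mem_filter hx)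
    omega
  rw [raiseParts, hbig, hones, filter_add_not]

theorem sum_lowerParts_add_card (hs : ∀ x ∈ s, 0 < x) : (lowerParts s).sum + card s = s.sum := by
  conv_rhs => rw [← raiseParts_lowerParts hs]
  rw [sum_raiseParts card_lowerParts_le]

end FirstColumn

def dysonParts (r : ℕ) (s : Multiset ℕ) : Multiset ℕ := (card s + r) ::ₘ lowerParts s

def dysonInvParts (r : ℕ) (t : Multiset ℕ) : Multiset ℕ := raiseParts (t.erase t.sup) (t.sup - r)

section Dyson
variable {r : ℕ} {s t : Multiset ℕ}

theorem sup_dysonParts (h : s.sup ≤ card s + r + 1) : (dysonParts r s).sup = card s + r := by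
  have := sup_lowerParts_le (s := s)
  rw [dysonParts, sup_cons, sup_eq_left]
  omega

theorem card_dysonParts : card (dysonParts r s) = card (lowerParts s) + 1 := by
  rw [dysonParts, card_cons]

theorem sum_dysonParts (hs : ∀ x ∈ s, 0 < x) : (dysonParts r s).sum = s.sum + r := by
  have := sum_lowerParts_add_card hs
  rw [dysonParts, sum_cons]
  omega

theorem dysonInvParts_dysonParts (hs : ∀ x ∈ s, 0 < x) (h : s.sup ≤ card s + r + 1) :
    dysonInvParts r (dysonParts r s) = s := by
  rw [dysonInvParts, sup_dysonParts h, dysonParts, erase_cons_head, Nat.add_sub_cancel,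
    raiseParts_lowerParts hs]

theorem card_erase_sup_le (ht₀ : t ≠ 0) (h : card t ≤ t.sup - r + 1) :
    card (t.erase t.sup) ≤ t.sup - r := by
  rw [card_erase_of_mem (sup_mem_of_ne_zero ht₀), Nat.pred_eq_sub_one]
  omega

theorem card_dysonInvParts (ht₀ : t ≠ 0) (h : card t ≤ t.sup - r + 1) :
    card (dysonInvParts r t) = t.sup - r :=
  card_raiseParts (card_erase_sup_le ht₀ h)

theorem sum_dysonInvParts (ht₀ : t ≠ 0) (hr : r ≤ t.sup) (h : card t ≤ t.sup - r + 1) :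
    (dysonInvParts r t).sum + r = t.sum := by
  have := sum_erase (sup_mem_of_ne_zero ht₀)
  rw [dysonInvParts, sum_raiseParts (card_erase_sup_le ht₀ h)]
  omega

theorem sup_dysonInvParts_le : (dysonInvParts r t).sup ≤ t.sup + 1 :=
  sup_raiseParts_le.trans (Nat.add_le_add_right (sup_mono (subset_of_le (erase_le _ _))) 1)

theorem dysonParts_dysonInvParts (ht : ∀ x ∈ t, 0 < x) (ht₀ : t ≠ 0) (hr : r ≤ t.sup)
    (h : card t ≤ t.sup - r + 1) : dysonParts r (dysonInvParts r t) = t := by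
  rw [dysonParts, card_dysonInvParts ht₀ h, dysonInvParts,
    lowerParts_raiseParts fun x hx => ht x (mem_of_mem_erase hx), Nat.sub_add_cancel hr,
    cons_erase (sup_mem_of_ne_zero ht₀)]

end Dyson

end Multiset

namespace YoungDiagram

theorem card_eq_sum_rowLens (μ : YoungDiagram) : μ.card = μ.rowLens.sum := by
  have hrow : ∀ c ∈ μ.cells, c.1 ∈ Finset.range (μ.colLen 0) := fun c hc => by
    rw [Finset.mem_range, ← mem_iff_lt_colLen]
    exact μ.up_left_mem le_rfl (Nat.zero_le _) hc
  rw [YoungDiagram.card, Finset.card_eq_sum_card_fiberwise hrow, rowLens, ← Multiset.sum_coe,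
    ← Multiset.map_coe, ← Multiset.range, ← Finset.range_val]
  exact Finset.sum_congr rfl fun i _ => μ.rowLen_eq_card.symm

theorem card_transpose (μ : YoungDiagram) : μ.transpose.card = μ.card := by
  simp [YoungDiagram.card, transpose]

theorem sup_rowLens (μ : YoungDiagram) : (μ.rowLens : Multiset ℕ).sup = μ.rowLen 0 := by
  refine le_antisymm (Multiset.sup_le.2 fun x hx => ?_) ?_
  · obtain ⟨i, -, rfl⟩ := List.mem_map.1 (Multiset.mem_coe.1 hx)
    exact μ.rowLen_anti 0 i (Nat.zero_le i)
  · rcases Nat.eq_zero_or_pos (μ.rowLen 0) with h | h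
    · exact h.le.trans (Nat.zero_le _)
    refine Multiset.le_sup (Multiset.mem_coe.2 (List.mem_map.2 ⟨0, ?_, rfl⟩))
    rw [List.mem_range, ← mem_iff_lt_colLen, mem_iff_lt_rowLen]
    exact h

end YoungDiagram

namespace Nat.Partition

theorem parts_ne_zero {n : ℕ} (hn : n ≠ 0) (P : n.Partition) : P.parts ≠ 0 := fun h =>
  hn (by rw [← P.parts_sum, h, Multiset.sum_zero])

theorem rank_lt {n : ℕ} (P : n.Partition) : rank P < max n 1 := by
  rcases Nat.eq_zero_or_pos n with rfl | hn
  · simp [rank]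
  · have hsup : P.parts.sup ≤ n := Multiset.sup_le.2 fun _ => le_of_mem_parts
    have hcard := Multiset.card_pos.2 (parts_ne_zero hn.ne' P)
    simp only [rank]
    omega

def dysonEquiv {r : ℕ} (hr : 1 ≤ r) (n : ℕ) :
    {P : n.Partition // rank P ≤ r + 1} ≃ {Q : (n + r).Partition // (r : ℤ) - 1 ≤ rank Q} where
  toFun P :=
    have hsup := Multiset.sup_dysonParts (r := r) (s := P.1.parts)
      (by have := P.2; unfold rank at this; omega)
    have hcard := Multiset.card_lowerParts_le (s := P.1.parts)
    ⟨⟨Multiset.dysonParts r P.1.parts, fun {x} hx => by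
        rcases Multiset.mem_cons.1 hx with rfl | hx
        · omega
        · exact Multiset.lowerParts_pos hx,
      by rw [Multiset.sum_dysonParts fun _ => P.1.parts_pos, P.1.parts_sum]⟩, by
      simp only [rank, hsup, Multiset.card_dysonParts]
      omega⟩
  invFun Q :=
    have ht₀ := parts_ne_zero (by omega) Q.1
    have hrank := Q.2
    have hpos := Multiset.card_pos.2 ht₀
    have hr' : r ≤ Q.1.parts.sup := by unfold rank at hrank; omega
    have hc : Multiset.card Q.1.parts ≤ Q.1.parts.sup - r + 1 := by unfold rank at hrank; omega
    ⟨⟨Multiset.dysonInvParts r Q.1.parts, Multiset.raiseParts_pos, by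
        have := Multiset.sum_dysonInvParts ht₀ hr' hc
        rw [Q.1.parts_sum] at this
        omega⟩, by
      have := Multiset.sup_dysonInvParts_le (r := r) (t := Q.1.parts)
      simp only [rank, Multiset.card_dysonInvParts ht₀ hc]
      omega⟩
  left_inv P := Subtype.ext <| Nat.Partition.ext <|
    Multiset.dysonInvParts_dysonParts (fun _ => P.1.parts_pos)
      (by have := P.2; unfold rank at this; omega)
  right_inv Q := by
    have ht₀ := parts_ne_zero (by omega) Q.1
    have hrank := Q.2
    have hpos := Multiset.card_pos.2 ht₀
    unfold rank at hrank
    exact Subtype.ext <| Nat.Partition.ext <|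
      Multiset.dysonParts_dysonInvParts (fun _ => Q.1.parts_pos) ht₀ (by omega) (by omega)

def equivYoungDiagram (n : ℕ) : n.Partition ≃ {μ : YoungDiagram // μ.card = n} where
  toFun P := ⟨.ofRowLens (P.parts.sort (· ≥ ·)) (Multiset.pairwise_sort _ _).sortedGE, by
    rw [YoungDiagram.card_eq_sum_rowLens, YoungDiagram.rowLens_ofRowLens_eq_self
      fun x hx => P.parts_pos ((Multiset.mem_sort _).1 hx), ← Multiset.sum_coe,
      Multiset.sort_eq, P.parts_sum]⟩
  invFun μ := ⟨μ.1.rowLens, fun hx => μ.1.pos_of_mem_rowLens _ hx, by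
    rw [Multiset.sum_coe, ← YoungDiagram.card_eq_sum_rowLens, μ.2]⟩
  left_inv P := Nat.Partition.ext <| by
    dsimp only
    rw [YoungDiagram.rowLens_ofRowLens_eq_self fun x hx => P.parts_pos ((Multiset.mem_sort _).1 hx),
      Multiset.sort_eq]
  right_inv μ := Subtype.ext <| by
    simp only [Multiset.coe_sort]
    conv_rhs => rw [← YoungDiagram.ofRowLens_to_rowLens_eq_self (μ := μ.1)]
    congr 1
    exact List.mergeSort_eq_self _ μ.1.rowLens_sorted.pairwise

theorem rank_equivYoungDiagram_symm {n : ℕ} (μ : {μ : YoungDiagram // μ.card = n}) :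
    rank ((equivYoungDiagram n).symm μ) = μ.1.rowLen 0 - μ.1.colLen 0 := by
  simp only [rank, equivYoungDiagram, Equiv.coe_fn_symm_mk, YoungDiagram.sup_rowLens,
    Multiset.coe_card, YoungDiagram.length_rowLens]

theorem rank_eq_rowLen_sub_colLen {n : ℕ} (P : n.Partition) :
    rank P = (equivYoungDiagram n P).1.rowLen 0 - (equivYoungDiagram n P).1.colLen 0 := by
  rw [← rank_equivYoungDiagram_symm, Equiv.symm_apply_apply]

def conjugate (n : ℕ) : Equiv.Perm n.Partition :=
  (equivYoungDiagram n).trans <|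
    (YoungDiagram.transposeOrderIso.toEquiv.subtypeEquiv fun μ => by
      rw [← YoungDiagram.card_transpose μ]; rfl).trans (equivYoungDiagram n).symm

theorem rank_conjugate {n : ℕ} (P : n.Partition) : rank (conjugate n P) = -rank P := by
  rw [conjugate, Equiv.trans_apply, Equiv.trans_apply, rank_equivYoungDiagram_symm,
    rank_eq_rowLen_sub_colLen P]
  simp [YoungDiagram.transposeOrderIso]

end Nat.Partition

theorem Nat.card_subtype_add_card_subtype_not {α : Type*} [Finite α] (q : α → Prop) :
    Nat.card {x // q x} + Nat.card {x // ¬ q x} = Nat.card α := by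
  classical
  rw [← Nat.card_sum, Nat.card_congr (Equiv.sumCompl q)]

def secondPentagonal (n : ℕ) : ℕ := n * (3 * n + 1) / 2

theorem secondPentagonal_succ (n : ℕ) :
    secondPentagonal (n + 1) = secondPentagonal n + (3 * n + 2) := by
  rw [secondPentagonal, secondPentagonal,
    show (n + 1) * (3 * (n + 1) + 1) = n * (3 * n + 1) + (3 * n + 2) * 2 by ring,
    Nat.add_mul_div_right _ _ two_pos]

theorem secondPentagonal_mono : Monotone secondPentagonal :=
  monotone_nat_of_le_succ fun n => by rw [secondPentagonal_succ]; omega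

theorem le_secondPentagonal (n : ℕ) : n ≤ secondPentagonal n := by
  induction n with
  | zero => exact le_rfl
  | succ n ih => rw [secondPentagonal_succ]; omega

theorem pz_natCast (n : ℕ) : pz n = p n := by
  simp [pz]

theorem pz_of_neg {m : ℤ} (hm : m < 0) : pz m = 0 := by
  simp [pz, not_le.2 hm]

noncomputable def numRankGe (s : ℤ) (n : ℕ) : ℕ := Nat.card {P : n.Partition // s ≤ rank P}

theorem numRankGe_eq_zero {s : ℤ} {n : ℕ} (hs : 0 < s) (hn : n ≤ s) : numRankGe s n = 0 := by
  have : IsEmpty {P : n.Partition // s ≤ rank P} := ⟨fun P => by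
    have := P.1.rank_lt
    have := P.2
    omega⟩
  exact Nat.card_of_isEmpty

theorem numRankGe_sub_one_add_numRankGe_add_two {r : ℕ} (hr : 1 ≤ r) (n : ℕ) :
    numRankGe (r - 1) (n + r) + numRankGe (r + 2) n = p n := by
  rw [numRankGe, ← Nat.card_congr (Nat.Partition.dysonEquiv hr n), numRankGe, p,
    ← Nat.card_subtype_add_card_subtype_not (fun P : n.Partition => rank P ≤ r + 1)]
  congr 1
  exact Nat.card_congr (Equiv.subtypeEquivRight fun P => by omega)

theorem Nrank_add_numRankGe_one (n : ℕ) : Nrank n + numRankGe 1 n = p n := by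
  rw [Nrank, p, ← Nat.card_subtype_add_card_subtype_not (fun P : n.Partition => 0 ≤ rank P),
    numRankGe]
  congr 1
  exact Nat.card_congr ((Nat.Partition.conjugate n).subtypeEquiv fun P => by
    rw [Nat.Partition.rank_conjugate]; omega).symm

theorem numRankGe_eq_sum (r m N : ℕ) (hN : m ≤ N) :
    (numRankGe (3 * r + 1) m : ℤ) = ∑ j ∈ range N,
      (-1) ^ j * (pz (m + secondPentagonal r - secondPentagonal (r + j + 1)) : ℤ) := by
  induction m using Nat.strong_induction_on generalizing r N with
  | _ m ih =>
  rcases lt_or_ge m (3 * r + 2) with hm | hm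
  · rw [numRankGe_eq_zero (by positivity) (by omega), Nat.cast_zero]
    refine (Finset.sum_eq_zero fun j _ => ?_).symm
    have := secondPentagonal_mono (show r + 1 ≤ r + j + 1 by omega)
    rw [secondPentagonal_succ] at this
    rw [pz_of_neg (by omega), Nat.cast_zero, mul_zero]
  obtain ⟨n, rfl⟩ := Nat.exists_eq_add_of_le' hm
  obtain ⟨N, rfl⟩ : ∃ N', N = N' + 1 := ⟨N - 1, by omega⟩
  have hg : (secondPentagonal (r + 1) : ℤ) = secondPentagonal r + (3 * r + 2) := by
    rw [secondPentagonal_succ]; push_cast; ring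
  have hdyson := numRankGe_sub_one_add_numRankGe_add_two (r := 3 * r + 2) (by omega) n
  rw [show ((3 * r + 2 : ℕ) : ℤ) - 1 = 3 * r + 1 by push_cast; ring,
    show ((3 * r + 2 : ℕ) : ℤ) + 2 = 3 * (r + 1 : ℕ) + 1 by push_cast; ring] at hdyson
  have hhead : pz ((n + (3 * r + 2) : ℕ) + secondPentagonal r - secondPentagonal (r + 0 + 1)) =
      p n := by
    rw [← pz_natCast, hg]
    congr 1
    push_cast
    ring
  have htail (j : ℕ) : (-1) ^ (j + 1) * (pz ((n + (3 * r + 2) : ℕ) + secondPentagonal r -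
        secondPentagonal (r + (j + 1) + 1)) : ℤ) =
      -((-1) ^ j * (pz (n + secondPentagonal (r + 1) - secondPentagonal (r + 1 + j + 1)) : ℤ)) := by
    rw [hg, pow_succ, show r + (j + 1) + 1 = r + 1 + j + 1 by ring]
    push_cast
    ring_nf
  rw [Finset.sum_range_succ', Finset.sum_congr rfl fun j _ => htail j, Finset.sum_neg_distrib,
    hhead, ← ih n (by omega) (r + 1) N (by omega), pow_zero, one_mul, ← hdyson]
  push_cast
  ring

theorem Nrank_eq_sum (m : ℕ) :
    (Nrank m : ℤ) = ∑ j ∈ range (m + 1), (-1) ^ j * (pz (m - secondPentagonal j) : ℤ) := by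
  have hcompl := Nrank_add_numRankGe_one m
  have hsum := numRankGe_eq_sum 0 m m le_rfl
  have hg0 : secondPentagonal 0 = 0 := rfl
  simp only [Nat.cast_zero, mul_zero, zero_add, hg0, add_zero] at hsum
  rw [Finset.sum_range_succ', hg0, Nat.cast_zero, sub_zero, pz_natCast, pow_zero, one_mul]
  simp only [pow_succ, mul_neg_one, neg_mul, Finset.sum_neg_distrib]
  omega

/- `PowerSeries ℚ` carries the product topology, which is that of `PowerSeries.WithPiTopology`
only up to unfolding, so the scoped instances have to be restated. -/
instance : IsTopologicalSemiring (PowerSeries ℚ) :=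
  PowerSeries.WithPiTopology.instIsTopologicalSemiring ℚ
instance : T2Space (PowerSeries ℚ) := PowerSeries.WithPiTopology.instT2Space ℚ

noncomputable def partitionSeries : PowerSeries ℚ := PowerSeries.mk fun n => (p n : ℚ)

theorem hasProd_partitionSeries :
    HasProd (fun i : ℕ => ∑' j : ℕ, (X : PowerSeries ℚ) ^ ((i + 1) * j)) partitionSeries := by
  have h : partitionSeries =
      PowerSeries.mk fun n => (#(Nat.Partition.restricted n fun _ => True) : ℚ) := by
    ext n
    simp [partitionSeries, p, Nat.Partition.restricted, Nat.card_eq_fintype_card]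
  rw [h]
  exact Nat.Partition.hasProd_powerSeriesMk_card_restricted ℚ (fun _ => True)

theorem inv_E : E⁻¹ = partitionSeries := by
  have hE : HasProd (fun i : ℕ => 1 - (X : PowerSeries ℚ) ^ (i + 1)) E :=
    (PowerSeries.WithPiTopology.multipliable_one_sub_X_pow ℚ).hasProd
  have hgeom (i : ℕ) :
      (1 - (X : PowerSeries ℚ) ^ (i + 1)) * ∑' j : ℕ, (X : PowerSeries ℚ) ^ ((i + 1) * j) = 1 := by
    simp_rw [pow_mul]
    exact PowerSeries.WithPiTopology.one_sub_mul_tsum_pow_of_constantCoeff_eq_zero (by simp)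
  have h := hE.mul hasProd_partitionSeries
  simp only [hgeom] at h
  have hmul : E * partitionSeries = 1 := h.unique hasProd_one
  rw [PowerSeries.inv_eq_iff_mul_eq_one, mul_comm, hmul]
  intro h0
  simpa [h0] using congrArg constantCoeff hmul

theorem coeff_partitionSeries_mul_X_pow (m k : ℕ) :
    coeff m (partitionSeries * X ^ k) = (pz (m - k) : ℚ) := by
  rw [PowerSeries.coeff_mul_X_pow', partitionSeries]
  split_ifs with h
  · rw [coeff_mk, ← Nat.cast_sub h, pz_natCast]
  · rw [pz_of_neg (by omega), Nat.cast_zero]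

theorem coeff_partitionSeries_mul_tsum (m : ℕ) :
    coeff m (partitionSeries *
        ∑' n : ℕ, ((-1 : ℚ) ^ n) • (X : PowerSeries ℚ) ^ secondPentagonal n) =
      ∑ n ∈ range (m + 1), (-1) ^ n * (pz (m - secondPentagonal n) : ℚ) := by
  have hsummable :
      Summable fun n : ℕ => ((-1 : ℚ) ^ n) • (X : PowerSeries ℚ) ^ secondPentagonal n :=
    (PowerSeries.WithPiTopology.summable_iff_summable_coeff ℚ).2 fun d =>
      summable_of_ne_finset_zero (s := range (d + 1)) fun n hn => by
        have := le_secondPentagonal n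
        rw [Finset.mem_range] at hn
        rw [map_smul, coeff_X_pow, if_neg (by omega), smul_zero]
  have h := (PowerSeries.WithPiTopology.hasSum_iff_hasSum_coeff ℚ).1
    (hsummable.hasSum.mul_left partitionSeries) m
  refine (h.unique (hasSum_sum_of_ne_finset_zero fun n hn => ?_)).trans
    (Finset.sum_congr rfl fun n _ => ?_)
  · have := le_secondPentagonal n
    rw [Finset.mem_range] at hn
    rw [mul_smul_comm, map_smul, coeff_partitionSeries_mul_X_pow, pz_of_neg (by omega),
      Nat.cast_zero, smul_zero]
  · rw [mul_smul_comm, map_smul, coeff_partitionSeries_mul_X_pow, smul_eq_mul]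

theorem stmt6 (m : ℕ) :
    (PowerSeries.coeff (R := ℚ) m)
        (E⁻¹ * ∑' n : ℕ, ((-1 : ℚ) ^ n) • (X : PowerSeries ℚ) ^ (n * (3 * n + 1) / 2)) =
      (Nrank m : ℚ) := by
  rw [inv_E]
  refine (coeff_partitionSeries_mul_tsum m).trans ?_
  exact_mod_cast (Nrank_eq_sum m).symm
end

section
/- As formal power series, (1/(q;q)_∞) Σ_{n=1}^∞ (-1)^{n-1} q^{3n(n+1)/2} = (1/((q;q^3)_∞ (q^2;q^3)_∞)) Σ_{n=0}^∞ q^{3(n+1)^2} / ((q^3;q^3)_n (q^3;q^3)_{n+1}). -/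
open PowerSeries Finset

/-- `(q^3;q^3)_n` as a formal power series. -/
noncomputable def qPoch3 (n : ℕ) : PowerSeries ℚ :=
  ∏ i ∈ range n, (1 - (X : PowerSeries ℚ) ^ (3 * (i + 1)))

/-- `(q;q^3)_∞` as a formal power series. -/
noncomputable def E3a : PowerSeries ℚ := ∏' i : ℕ, (1 - (X : PowerSeries ℚ) ^ (3 * i + 1))

/-- `(q^2;q^3)_∞` as a formal power series. -/
noncomputable def E3b : PowerSeries ℚ := ∏' i : ℕ, (1 - (X : PowerSeries ℚ) ^ (3 * i + 2))

/-!
Put `t = q ^ 3`. Since `(q;q)_∞ = (q;q³)_∞ (q²;q³)_∞ (t;t)_∞`, the claim is the identity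
`(t;t)_∞ ∑ t ^ (n + 1)² / ((t;t)_n (t;t)_{n+1}) = ∑ (-1)ⁿ t ^ ((n + 1)(n + 2) / 2)` in one variable.
Its two sides are `t G(2)` and `t A(2)`, where
`G(m) = (t;t)_∞ ∑ t ^ (n (n + m)) / ((t;t)_n (t;t)_{n+m-1})` and
`A(m) = ∑ (-1)ⁿ t ^ (m n + n (n - 1) / 2)`.
Both satisfy `Y(m) = 1 - t ^ m Y(m + 1)`, and a sequence satisfying this recursion is determined
`t`-adically. For `G` the recursion rests on the Durfee rectangle identity
`F(m) = (t;t)_∞ ∑ t ^ (n (n + m)) / ((t;t)_n (t;t)_{n+m}) = 1`, proved the same way: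
`F(m) - F(m + 1) = t ^ (m + 1) (F(m + 2) - F(m + 1))` makes `F` constant,
and `F(m) ≡ 1 mod t ^ (m + 1)`.
-/

open Filter Topology

instance : IsTopologicalRing ℚ⟦X⟧ := PowerSeries.WithPiTopology.instIsTopologicalRing ℚ

instance : T2Space ℚ⟦X⟧ := PowerSeries.WithPiTopology.instT2Space ℚ

section Order

variable {f : ℕ → ℚ⟦X⟧}

lemma tendsto_order_atTop_nhds_top_of_le (h : ∀ n : ℕ, (n : ℕ∞) ≤ (f n).order) :
    Tendsto (fun n ↦ (f n).order) atTop (𝓝 ⊤) :=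
  ENat.tendsto_nhds_top_iff_natCast_lt.mpr fun D ↦ eventually_atTop.mpr
    ⟨D + 1, fun n hn ↦ lt_of_lt_of_le (by exact_mod_cast hn) (h n)⟩

lemma summable_of_le_order (h : ∀ n : ℕ, (n : ℕ∞) ≤ (f n).order) : Summable f :=
  PowerSeries.WithPiTopology.summable_of_tendsto_order_atTop_nhds_top _
    (tendsto_order_atTop_nhds_top_of_le h)

lemma multipliable_one_sub_of_le_order (h : ∀ n : ℕ, (n : ℕ∞) ≤ (f n).order) :
    Multipliable fun n ↦ 1 - f n := by
  simp_rw [sub_eq_add_neg]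
  exact PowerSeries.WithPiTopology.multipliable_one_add_of_tendsto_order_atTop_nhds_top _
    (tendsto_order_atTop_nhds_top_of_le (f := (- f ·)) (by simpa [order_neg] using h))

lemma isClosed_setOf_le_order (D : ℕ) : IsClosed {φ : ℚ⟦X⟧ | (D : ℕ∞) ≤ φ.order} := by
  have : {φ : ℚ⟦X⟧ | (D : ℕ∞) ≤ φ.order} = ⋂ i ∈ range D, {φ | coeff i φ = 0} := by
    ext φ
    simp only [Set.mem_ofPred_eq, Set.mem_iInter, mem_range]
    exact ⟨fun h i hi ↦ coeff_of_lt_order i (lt_of_lt_of_le (by exact_mod_cast hi) h),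
      nat_le_order φ D⟩
  rw [this]
  exact isClosed_biInter fun i _ ↦
    isClosed_eq (PowerSeries.WithPiTopology.continuous_coeff ℚ i) continuous_const

lemma le_order_tsum {D : ℕ} (h : ∀ n, (D : ℕ∞) ≤ (f n).order) :
    (D : ℕ∞) ≤ (∑' n, f n).order := by
  by_cases hf : Summable f
  · refine (isClosed_setOf_le_order D).mem_of_tendsto hf.hasSum (.of_forall fun s ↦ ?_)
    exact Finset.sum_induction _ (fun φ : ℚ⟦X⟧ ↦ (D : ℕ∞) ≤ φ.order)
      (fun φ ψ hφ hψ ↦ (le_min hφ hψ).trans (min_order_le_order_add φ ψ)) (by simp)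
      fun n _ ↦ h n
  · simp [tsum_eq_zero_of_not_summable hf]

lemma le_order_tprod_one_sub_sub_one {D : ℕ} (h : ∀ n, (D : ℕ∞) ≤ (f n).order) :
    (D : ℕ∞) ≤ ((∏' n, (1 - f n)) - 1).order := by
  by_cases hf : Multipliable fun n ↦ 1 - f n
  · refine ((isClosed_setOf_le_order D).preimage (continuous_sub_right 1)).mem_of_tendsto
      hf.hasProd (.of_forall fun s ↦ nat_le_order _ _ fun k hk ↦ ?_)
    have := coeff_mul_prod_one_sub_of_lt_order k s 1 f fun i _ ↦
      lt_of_lt_of_le (by exact_mod_cast hk) (h i)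
    simpa [sub_eq_zero] using this
  · simp [tprod_eq_one_of_not_multipliable hf]

lemma eq_zero_of_eq_mul_succ {d u : ℕ → ℚ⟦X⟧} (hu : ∀ k, constantCoeff (u k) = 0)
    (h : ∀ k, d k = u k * d (k + 1)) (k : ℕ) : d k = 0 := by
  suffices ∀ (D : ℕ) k, (D : ℕ∞) ≤ (d k).order from
    order_eq_top.mp (ENat.eq_top_iff_forall_ge.mpr fun D ↦ this D k)
  intro D
  induction D with
  | zero => simp
  | succ D ih =>
    intro k
    rw [h k, Nat.cast_succ, add_comm]
    exact (add_le_add (one_le_order_iff_constCoeff_eq_zero.mpr (hu k)) (ih _)).trans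
      (le_order_mul _ _)

lemma order_le_order_mul (φ ψ : ℚ⟦X⟧) : φ.order ≤ (φ * ψ).order :=
  le_self_add.trans (le_order_mul φ ψ)

end Order

/-- `(t; t)_n`. -/
noncomputable def qPochhammer (t : ℚ⟦X⟧) (n : ℕ) : ℚ⟦X⟧ := ∏ i ∈ range n, (1 - t ^ (i + 1))

/-- `(t ^ s; t)_∞`. -/
noncomputable def qPochhammerTail (t : ℚ⟦X⟧) (s : ℕ) : ℚ⟦X⟧ := ∏' i, (1 - t ^ (i + s))

section qPochhammer

variable {t : ℚ⟦X⟧}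

lemma multipliable_one_sub_pow (ht : constantCoeff t = 0) {e : ℕ → ℕ} (he : ∀ i, i ≤ e i) :
    Multipliable fun i ↦ 1 - t ^ e i :=
  multipliable_one_sub_of_le_order fun i ↦
    (Nat.cast_le.mpr (he i)).trans (le_order_pow_of_constantCoeff_eq_zero _ ht)

lemma constantCoeff_qPochhammer (ht : constantCoeff t = 0) (n : ℕ) :
    constantCoeff (qPochhammer t n) = 1 := by
  simp [qPochhammer, ht]

lemma qPochhammer_succ (t : ℚ⟦X⟧) (n : ℕ) :
    qPochhammer t (n + 1) = qPochhammer t n * (1 - t ^ (n + 1)) :=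
  prod_range_succ _ n

lemma one_sub_pow_mul_inv_qPochhammer_succ (ht : constantCoeff t = 0) (n : ℕ) :
    (1 - t ^ (n + 1)) * (qPochhammer t (n + 1))⁻¹ = (qPochhammer t n)⁻¹ := by
  rw [qPochhammer_succ, PowerSeries.mul_inv_rev, ← mul_assoc,
    PowerSeries.mul_inv_cancel _ (by simp [ht]), one_mul]

lemma qPochhammerTail_eq_mul_succ (ht : constantCoeff t = 0) (s : ℕ) :
    qPochhammerTail t s = (1 - t ^ s) * qPochhammerTail t (s + 1) := by
  have := tprod_eq_zero_mul' (f := fun i ↦ 1 - t ^ (i + s))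
    (multipliable_one_sub_pow ht (e := fun i ↦ i + 1 + s) fun i ↦ by omega)
  simpa only [qPochhammerTail, zero_add, add_right_comm _ 1 s, add_assoc] using this

lemma qPochhammerTail_one (ht : constantCoeff t = 0) (N : ℕ) :
    qPochhammerTail t 1 = qPochhammer t N * qPochhammerTail t (N + 1) := by
  induction N with
  | zero => simp [qPochhammer]
  | succ N ih => rw [ih, qPochhammerTail_eq_mul_succ ht (N + 1), qPochhammer_succ]; ring

lemma le_order_qPochhammerTail_sub_one (ht : constantCoeff t = 0) (s : ℕ) :
    (s : ℕ∞) ≤ (qPochhammerTail t s - 1).order :=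
  le_order_tprod_one_sub_sub_one fun i ↦
    (Nat.cast_le.mpr (Nat.le_add_left s i)).trans (le_order_pow_of_constantCoeff_eq_zero _ ht)

lemma constantCoeff_qPochhammerTail (ht : constantCoeff t = 0) {s : ℕ} (hs : 0 < s) :
    constantCoeff (qPochhammerTail t s) = 1 := by
  have := one_le_order_iff_constCoeff_eq_zero.mp
    ((Nat.one_le_cast.mpr hs).trans (le_order_qPochhammerTail_sub_one ht s))
  rwa [map_sub, map_one, sub_eq_zero] at this

end qPochhammer

/-- For `r ≥ 1`, `durfeeSum t m r = (t; t)_∞ ∑ₙ t ^ (n (n + m)) / ((t; t)_n (t; t)_{n + r - 1})`. -/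
noncomputable def durfeeSum (t : ℚ⟦X⟧) (m r : ℕ) : ℚ⟦X⟧ :=
  ∑' n, t ^ (n * (n + m)) * qPochhammerTail t (n + r) * (qPochhammer t n)⁻¹

section durfeeSum

variable {t : ℚ⟦X⟧}

lemma le_order_pow_mul_mul (ht : constantCoeff t = 0) (k : ℕ) (φ ψ : ℚ⟦X⟧) :
    (k : ℕ∞) ≤ (t ^ k * φ * ψ).order :=
  (le_order_pow_of_constantCoeff_eq_zero k ht).trans
    ((order_le_order_mul _ _).trans (order_le_order_mul _ _))

lemma summable_durfeeSum (ht : constantCoeff t = 0) (m r : ℕ) :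
    Summable fun n ↦ t ^ (n * (n + m)) * qPochhammerTail t (n + r) * (qPochhammer t n)⁻¹ :=
  summable_of_le_order fun n ↦ (Nat.cast_le.mpr ((Nat.le_mul_self n).trans
    (Nat.mul_le_mul_left n (Nat.le_add_right n m)))).trans (le_order_pow_mul_mul ht _ _ _)

lemma durfeeSum_eq_sub (ht : constantCoeff t = 0) (m r : ℕ) :
    durfeeSum t m r = durfeeSum t m (r + 1) - t ^ r * durfeeSum t (m + 1) (r + 1) := by
  rw [durfeeSum, durfeeSum, durfeeSum, ← (summable_durfeeSum ht _ _).tsum_mul_left,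
    ← (summable_durfeeSum ht _ _).tsum_sub ((summable_durfeeSum ht _ _).mul_left _)]
  refine tsum_congr fun n ↦ ?_
  rw [qPochhammerTail_eq_mul_succ ht (n + r)]
  ring_nf

lemma durfeeSum_sub_durfeeSum_succ (ht : constantCoeff t = 0) (m r : ℕ) :
    durfeeSum t m r - durfeeSum t (m + 1) r = t ^ (m + 1) * durfeeSum t (m + 2) (r + 1) := by
  rw [durfeeSum, durfeeSum, durfeeSum, ← (summable_durfeeSum ht _ _).tsum_mul_left,
    ← (summable_durfeeSum ht _ _).tsum_sub (summable_durfeeSum ht _ _),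
    ((summable_durfeeSum ht _ _).sub (summable_durfeeSum ht _ _)).tsum_eq_zero_add]
  simp only [zero_mul, pow_zero, sub_self, zero_add]
  refine tsum_congr fun n ↦ ?_
  rw [← one_sub_pow_mul_inv_qPochhammer_succ ht n]
  ring_nf

lemma le_order_durfeeSum_sub_one (ht : constantCoeff t = 0) (m : ℕ) :
    ((m + 1 : ℕ) : ℕ∞) ≤ (durfeeSum t m (m + 1) - 1).order := by
  rw [durfeeSum, (summable_durfeeSum ht _ _).tsum_eq_zero_add]
  simp only [zero_mul, pow_zero, one_mul, zero_add, qPochhammer, prod_range_zero, inv_one,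
    mul_one, add_sub_right_comm]
  refine le_trans (le_min ?_ ?_) (min_order_le_order_add _ _)
  · exact le_order_qPochhammerTail_sub_one ht _
  · exact le_order_tsum fun n ↦ (Nat.cast_le.mpr (by nlinarith)).trans
      (le_order_pow_mul_mul ht _ _ _)

lemma durfeeSum_eq_one (ht : constantCoeff t = 0) (m : ℕ) : durfeeSum t m (m + 1) = 1 := by
  set F : ℕ → ℚ⟦X⟧ := fun k ↦ durfeeSum t k (k + 1)
  have hF : ∀ k, F k - F (k + 1) = -t ^ (k + 1) * (F (k + 1) - F (k + 2)) := fun k ↦ by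
    linear_combination durfeeSum_eq_sub ht k (k + 1) + durfeeSum_sub_durfeeSum_succ ht k (k + 2)
  have hconst : ∀ k, F k = F 0 := by
    intro k
    induction k with
    | zero => rfl
    | succ k ih =>
      rw [← ih, eq_comm, ← sub_eq_zero]
      exact eq_zero_of_eq_mul_succ (fun k ↦ by simp [ht]) hF k
  have h0 : F 0 = 1 := sub_eq_zero.mp <| order_eq_top.mp <| ENat.eq_top_iff_forall_ge.mpr
    fun k ↦ (Nat.cast_le.mpr k.le_succ).trans (hconst k ▸ le_order_durfeeSum_sub_one ht k)
  exact (hconst m).trans h0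

lemma durfeeSum_diag_eq (ht : constantCoeff t = 0) (m : ℕ) :
    durfeeSum t m m = 1 - t ^ m * durfeeSum t (m + 1) (m + 1) := by
  rw [durfeeSum_eq_sub ht, durfeeSum_eq_one ht]

end durfeeSum

noncomputable def falseTheta (t : ℚ⟦X⟧) (m : ℕ) : ℚ⟦X⟧ :=
  ∑' n, (-1 : ℚ) ^ n • t ^ (m * n + n.choose 2)

section falseTheta

variable {t : ℚ⟦X⟧}

lemma summable_falseTheta (ht : constantCoeff t = 0) {m : ℕ} (hm : 0 < m) :
    Summable fun n ↦ (-1 : ℚ) ^ n • t ^ (m * n + n.choose 2) :=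
  summable_of_le_order fun n ↦ (Nat.cast_le.mpr ((Nat.le_mul_of_pos_left n hm).trans
    (Nat.le_add_right _ _))).trans ((le_order_pow_of_constantCoeff_eq_zero _ ht).trans
    le_order_smul)

lemma falseTheta_eq (ht : constantCoeff t = 0) {m : ℕ} (hm : 0 < m) :
    falseTheta t m = 1 - t ^ m * falseTheta t (m + 1) := by
  rw [falseTheta, falseTheta, (summable_falseTheta ht hm).tsum_eq_zero_add,
    ← (summable_falseTheta ht m.add_one_pos).tsum_mul_left, sub_eq_add_neg, ← tsum_neg]
  simp only [pow_zero, mul_zero, Nat.choose_zero_succ, add_zero, one_smul]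
  refine congrArg _ (tsum_congr fun n ↦ ?_)
  rw [Nat.choose_succ_succ', Nat.choose_one_right,
    show m * (n + 1) + (n + n.choose 2) = m + ((m + 1) * n + n.choose 2) by ring, pow_add t,
    pow_succ (-1 : ℚ) n, mul_neg_one, neg_smul, mul_smul_comm]

lemma durfeeSum_diag_eq_falseTheta (ht : constantCoeff t = 0) {m : ℕ} (hm : 0 < m) :
    durfeeSum t m m = falseTheta t m := by
  have := eq_zero_of_eq_mul_succ
    (d := fun k ↦ durfeeSum t (k + m) (k + m) - falseTheta t (k + m))
    (u := fun k ↦ -t ^ (k + m)) (fun k ↦ by simp [ht]; omega)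
    (fun k ↦ by
      rw [durfeeSum_diag_eq ht, falseTheta_eq ht (by omega), add_right_comm k 1 m]
      ring) 0
  simpa [sub_eq_zero] using this

end falseTheta

theorem qPochhammerTail_one_mul_tsum {t : ℚ⟦X⟧} (ht : constantCoeff t = 0) :
    qPochhammerTail t 1 * ∑' n, t ^ ((n + 1) ^ 2) * (qPochhammer t n * qPochhammer t (n + 1))⁻¹ =
      ∑' n, (-1 : ℚ) ^ n • t ^ ((n + 2).choose 2) := by
  have hsum : Summable fun n ↦ t ^ ((n + 1) ^ 2) * (qPochhammer t n * qPochhammer t (n + 1))⁻¹ :=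
    summable_of_le_order fun n ↦ (Nat.cast_le.mpr (by nlinarith)).trans
      ((le_order_pow_of_constantCoeff_eq_zero _ ht).trans (order_le_order_mul _ _))
  calc _ = t * durfeeSum t 2 2 := by
        rw [← hsum.tsum_mul_left, durfeeSum, ← (summable_durfeeSum ht 2 2).tsum_mul_left]
        refine tsum_congr fun n ↦ ?_
        have := PowerSeries.mul_inv_cancel (qPochhammer t (n + 1))
          (by simp [constantCoeff_qPochhammer ht])
        rw [qPochhammerTail_one ht (n + 1), PowerSeries.mul_inv_rev,
          show (n + 1) ^ 2 = n * (n + 2) + 1 by ring, pow_succ]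
        linear_combination (t ^ (n * (n + 2)) * t * qPochhammerTail t (n + 2) *
          (qPochhammer t n)⁻¹) * this
    _ = t * falseTheta t 2 := by rw [durfeeSum_diag_eq_falseTheta ht two_pos]
    _ = _ := by
        rw [falseTheta, ← (summable_falseTheta ht two_pos).tsum_mul_left]
        refine tsum_congr fun n ↦ ?_
        rw [mul_smul_comm, ← pow_succ', show (n + 2).choose 2 = 2 * n + n.choose 2 + 1 by
          simp [Nat.choose_succ_succ', Nat.choose_one_right]; ring]

lemma tprod_eq_mul_mul_of_mod_three {M : Type*} [CommMonoid M] [TopologicalSpace M]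
    [ContinuousMul M] [T2Space M] {f : ℕ → M} (hf : Multipliable f)
    (h₀ : Multipliable fun k ↦ f (3 * k)) (h₁ : Multipliable fun k ↦ f (3 * k + 1))
    (h₂ : Multipliable fun k ↦ f (3 * k + 2)) :
    ∏' i, f i = (∏' k, f (3 * k)) * (∏' k, f (3 * k + 1)) * ∏' k, f (3 * k + 2) := by
  have hrange : ∀ N, ∏ i ∈ range (3 * N), f i = (∏ k ∈ range N, f (3 * k)) *
      (∏ k ∈ range N, f (3 * k + 1)) * ∏ k ∈ range N, f (3 * k + 2) := by
    intro N
    induction N with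
    | zero => simp
    | succ N ih =>
      rw [show 3 * (N + 1) = 3 * N + 2 + 1 by ring, prod_range_succ, prod_range_succ,
        prod_range_succ, ih, prod_range_succ, prod_range_succ, prod_range_succ]
      ac_rfl
  refine tendsto_nhds_unique
    (hf.hasProd.tendsto_prod_nat.comp (tendsto_id.const_mul_atTop' three_pos)) ?_
  simp only [Function.comp_def, id, hrange]
  exact (h₀.hasProd.tendsto_prod_nat.mul h₁.hasProd.tendsto_prod_nat).mul
    h₂.hasProd.tendsto_prod_nat

lemma E_eq_E3a_mul_E3b_mul : E = E3a * E3b * qPochhammerTail (X ^ 3) 1 := by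
  have hX : constantCoeff (X : ℚ⟦X⟧) = 0 := constantCoeff_X
  rw [E, tprod_eq_mul_mul_of_mod_three (multipliable_one_sub_pow hX fun i ↦ by omega)
    (multipliable_one_sub_pow hX fun i ↦ by omega) (multipliable_one_sub_pow hX fun i ↦ by omega)
    (multipliable_one_sub_pow hX fun i ↦ by omega)]
  congr 1
  exact tprod_congr fun k ↦ by rw [← pow_mul]; ring_nf

lemma qPoch3_eq_qPochhammer (n : ℕ) : qPoch3 n = qPochhammer (X ^ 3) n := by
  simp only [qPoch3, qPochhammer, ← pow_mul]

lemma three_mul_add_one_mul_add_two_div_two (n : ℕ) :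
    3 * (n + 1) * (n + 2) / 2 = 3 * (n + 2).choose 2 := by
  have h : (n + 2) * (n + 1) = (n + 2).choose 2 * 2 := by
    simpa using Nat.add_one_mul_choose_eq (n + 1) 1
  apply Nat.div_eq_of_eq_mul_left two_pos
  rw [mul_assoc 3 (Nat.choose _ _), ← h]
  ring

theorem stmt14 :
    E⁻¹ * (∑' n : ℕ, ((-1 : ℚ) ^ n) • (X : PowerSeries ℚ) ^ (3 * (n + 1) * (n + 2) / 2)) =
      (E3a * E3b)⁻¹ *
        ∑' n : ℕ, (X : PowerSeries ℚ) ^ (3 * (n + 1) ^ 2) * (qPoch3 n * qPoch3 (n + 1))⁻¹ := by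
  have hX3 : constantCoeff ((X : ℚ⟦X⟧) ^ 3) = 0 := by simp
  have hunit : (qPochhammerTail (X ^ 3) 1)⁻¹ * qPochhammerTail (X ^ 3) 1 = 1 :=
    PowerSeries.inv_mul_cancel _ (by simp [constantCoeff_qPochhammerTail hX3 one_pos])
  simp only [three_mul_add_one_mul_add_two_div_two, pow_mul, qPoch3_eq_qPochhammer]
  rw [← qPochhammerTail_one_mul_tsum hX3, E_eq_E3a_mul_E3b_mul, PowerSeries.mul_inv_rev]
  linear_combination ((E3a * E3b)⁻¹ * ∑' n, (X ^ 3) ^ ((n + 1) ^ 2) *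
    (qPochhammer (X ^ 3) n * qPochhammer (X ^ 3) (n + 1))⁻¹) * hunit
end
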